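/- Let L and M be algebraic lattices, each equipped with its Scott topology, and let f : L → M be a continuous map that preserves arbitrary meets (f(⨅S) = ⨅f[S] for every S ⊆ L). Then f is a spectral map: f is continuous and the preimage under f of every compact open subset of M is a compact open subset of L. -/

import Mathlib

/-- A Scott-open subset of a complete lattice: an upper set `U` such that whenever the
supremum of a (nonempty) directed set belongs to `U`, the directed set meets `U`. -/
def ScottOpen {X : Type*} [CompleteLattice X] (U : Set X) : Prop :=
  IsUpperSet U ∧
    ∀ S : Set X, S.Nonempty → DirectedOn (· ≤ ·) S → sSup S ∈ U → (S ∩ U).Nonempty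

/-- The Scott topology on a complete lattice. -/
def scottTop (X : Type*) [CompleteLattice X] : TopologicalSpace X :=
  TopologicalSpace.generateFrom {U : Set X | ScottOpen U}

/-- The compactness notion of Mathlib (December 2024), `CompleteLattice.IsCompactElement`,
restored with its old definition (Mathlib has since moved and redefined it). -/
def CompleteLattice.IsCompactElement {α : Type*} [CompleteLattice α] (k : α) :=
  ∀ s : Set α, k ≤ sSup s → ∃ t : Finset α, ↑t ⊆ s ∧ k ≤ t.sup id

lemma scottOpen_of_isOpen {X : Type*} [CompleteLattice X] {U : Set X}
    (h : @IsOpen X (scottTop X) U) : ScottOpen U := by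
  induction h with
  | basic V hV => exact hV
  | univ => exact ⟨fun a b _ h => h, fun S hS _ _ => ⟨hS.choose, hS.choose_spec, trivial⟩⟩
  | inter V W _ _ ihV ihW =>
      refine ⟨ihV.1.inter ihW.1, fun S hS hdir hsup => ?_⟩
      obtain ⟨a, haS, haV⟩ := ihV.2 S hS hdir hsup.1
      obtain ⟨b, hbS, hbW⟩ := ihW.2 S hS hdir hsup.2
      obtain ⟨c, hcS, hac, hbc⟩ := hdir a haS b hbS
      exact ⟨c, hcS, ihV.1 hac haV, ihW.1 hbc hbW⟩
  | sUnion 𝒮 _ ih =>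
      refine ⟨isUpperSet_sUnion fun V hV => (ih V hV).1, fun S hS hdir hsup => ?_⟩
      obtain ⟨V, hV, hmem⟩ := hsup
      obtain ⟨a, haS, haV⟩ := (ih V hV).2 S hS hdir hmem
      exact ⟨a, haS, V, hV, haV⟩

lemma isOpen_of_scottOpen {X : Type*} [CompleteLattice X] {U : Set X}
    (h : ScottOpen U) : @IsOpen X (scottTop X) U :=
  TopologicalSpace.GenerateOpen.basic U h

/-- Every principal upper set is compact in the Scott topology. -/
lemma isCompact_Ici {X : Type*} [CompleteLattice X] (x : X) :
    @IsCompact X (scottTop X) (Set.Ici x) := by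
  rw [@isCompact_iff_finite_subcover X (scottTop X)]
  intro ι U hU hcov
  have hi := hcov (Set.mem_Ici.2 le_rfl)
  rw [Set.mem_iUnion] at hi
  obtain ⟨i, hi⟩ := hi
  refine ⟨{i}, fun y hy => ?_⟩
  exact Set.mem_biUnion (Finset.mem_singleton_self i) ((scottOpen_of_isOpen (hU i)).1 hy hi)

lemma isCompactElement_bot {X : Type*} [CompleteLattice X] :
    CompleteLattice.IsCompactElement (⊥ : X) :=
  fun _ _ => ⟨∅, by simp⟩

lemma isCompactElement_sup {X : Type*} [CompleteLattice X] {a b : X}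
    (ha : CompleteLattice.IsCompactElement a) (hb : CompleteLattice.IsCompactElement b) :
    CompleteLattice.IsCompactElement (a ⊔ b) := by
  classical
  intro s hsup
  obtain ⟨t₁, ht₁s, ht₁⟩ := ha s (le_sup_left.trans hsup)
  obtain ⟨t₂, ht₂s, ht₂⟩ := hb s (le_sup_right.trans hsup)
  refine ⟨t₁ ∪ t₂, by simpa using ⟨ht₁s, ht₂s⟩, ?_⟩
  rw [Finset.sup_union]
  exact sup_le_sup ht₁ ht₂

/-- Principal upper set of a compact element is Scott-open. -/
lemma scottOpen_Ici {X : Type*} [CompleteLattice X] {k : X}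
    (hk : CompleteLattice.IsCompactElement k) : ScottOpen (Set.Ici k) := by
  refine ⟨fun a b hab ha => le_trans ha hab, fun S hS hdir hsup => ?_⟩
  obtain ⟨x, hxS, hx⟩ :=
    (CompleteLattice.isCompactElement_iff_le_of_directed_sSup_le X k).1
      ((CompleteLattice.isCompactElement_iff_exists_le_sSup_of_le_sSup X k).2 hk) S hS hdir hsup
  exact ⟨x, hxS, hx⟩

/-- A Scott-continuous map between algebraic lattices that preserves
arbitrary meets is a spectral map: continuous and preimages of compact opens are
compact open. -/
theorem statement_17 {L M : Type*} [CompleteLattice L] [CompleteLattice M]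
    (hL : ∀ x : L, x = sSup {k : L | CompleteLattice.IsCompactElement k ∧ k ≤ x})
    (hM : ∀ y : M, y = sSup {k : M | CompleteLattice.IsCompactElement k ∧ k ≤ y})
    (f : L → M)
    (hcont : @Continuous L M (scottTop L) (scottTop M) f)
    (hmeet : ∀ S : Set L, f (sInf S) = sInf (f '' S)) :
    @Continuous L M (scottTop L) (scottTop M) f ∧
      ∀ U : Set M, @IsOpen M (scottTop M) U → @IsCompact M (scottTop M) U →
        @IsOpen L (scottTop L) (f ⁻¹' U) ∧ @IsCompact L (scottTop L) (f ⁻¹' U) := by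
  -- f is monotone
  have hmono : Monotone f := by
    intro a b hab
    have h1 : f (sInf {a, b}) = sInf (f '' {a, b}) := hmeet {a, b}
    rw [Set.image_pair, sInf_pair, sInf_pair, inf_eq_left.2 hab] at h1
    exact h1 ▸ inf_le_right
  -- left adjoint
  set g : M → L := fun y => sInf {x : L | y ≤ f x} with hg
  have hadj : ∀ (y : M) (x : L), y ≤ f x ↔ g y ≤ x := by
    intro y x
    constructor
    · intro h; exact sInf_le h
    · intro h
      have : y ≤ f (g y) := by
        rw [hg]
        simp only
        rw [hmeet]
        exact le_sInf (by rintro z ⟨w, hw, rfl⟩; exact hw)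
      exact this.trans (hmono h)
  have hpre : ∀ y : M, f ⁻¹' (Set.Ici y) = Set.Ici (g y) := by
    intro y; ext x; exact hadj y x
  refine ⟨hcont, fun U hU hUc => ?_⟩
  refine ⟨@Continuous.isOpen_preimage L M (scottTop L) (scottTop M) f hcont U hU, ?_⟩
  -- U is a union of Ici k over compact elements k ∈ U
  have hUscott := scottOpen_of_isOpen hU
  have hcover : U = ⋃ k : {k : M // CompleteLattice.IsCompactElement k ∧ k ∈ U}, Set.Ici k.1 := by
    apply Set.Subset.antisymm
    · intro y hy
      set S := {k : M | CompleteLattice.IsCompactElement k ∧ k ≤ y} with hS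
      have hSne : S.Nonempty := ⟨⊥, isCompactElement_bot, bot_le⟩
      have hSdir : DirectedOn (· ≤ ·) S := by
        rintro a ⟨ha, hay⟩ b ⟨hb, hby⟩
        exact ⟨a ⊔ b, ⟨isCompactElement_sup ha hb, sup_le hay hby⟩, le_sup_left, le_sup_right⟩
      have hsup : sSup S ∈ U := by rw [← hM y]; exact hy
      obtain ⟨k, ⟨hkc, hky⟩, hkU⟩ := hUscott.2 S hSne hSdir hsup
      exact Set.mem_iUnion.2 ⟨⟨k, hkc, hkU⟩, hky⟩
    · rintro y hy
      obtain ⟨⟨k, hkc, hkU⟩, hky⟩ := Set.mem_iUnion.1 hy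
      exact hUscott.1 hky hkU
  -- get a finite subcover
  rw [@isCompact_iff_finite_subcover M (scottTop M)] at hUc
  obtain ⟨t, ht⟩ := hUc (fun k : {k : M // CompleteLattice.IsCompactElement k ∧ k ∈ U} =>
      Set.Ici k.1)
    (fun k => isOpen_of_scottOpen (scottOpen_Ici k.2.1)) (le_of_eq hcover)
  have hUeq : U = ⋃ k ∈ t, Set.Ici k.1 := by
    apply Set.Subset.antisymm
    · intro y hy
      simpa using ht hy
    · intro y hy
      simp only [Set.mem_iUnion] at hy
      obtain ⟨k, _, hky⟩ := hy
      exact hUscott.1 hky k.2.2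
  rw [hUeq]
  have : f ⁻¹' (⋃ k ∈ t, Set.Ici k.1) = ⋃ k ∈ t, Set.Ici (g k.1) := by
    rw [Set.preimage_iUnion₂]
    exact Set.iUnion₂_congr fun k _ => hpre k.1
  rw [this]
  exact @Finset.isCompact_biUnion L _ (scottTop L) t _ fun k _ => isCompact_Ici (g k.1)
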